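/- arXiv:math/0012220 — 5 statements merged into one kernel-verified Lean document; each statement's English description precedes it below -/
import Mathlib

section
/- Let B_{p,q} denote the set of complex p×q matrices z with operator norm less than 1 (equivalently zz* < 1), with p ≤ q. For g = [[a,b],[c,d]] in U(p,q) (block sizes p and q) and z ∈ B_{p,q}, the matrix a + zc is invertible, and the map z ↦ (a+zc)^{-1}(b+zd) maps B_{p,q} to itself. -/
open Matrix
open scoped ComplexOrder

lemma posDef_mul_mul_conjTranspose {n : Type*} [Fintype n] [DecidableEq n]
    {M B : Matrix n n ℂ} (hM : M.PosDef) (hB : IsUnit B) : (B * M * Bᴴ).PosDef := by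
  refine Matrix.PosDef.of_dotProduct_mulVec_pos (hM.posSemidef.mul_mul_conjTranspose_same B).1 fun x hx => ?_
  have hB' : IsUnit Bᴴ := by
    rw [← Matrix.isUnit_conjTranspose] at hB
    simpa using hB
  have hinj : Function.Injective (Bᴴ.mulVec) := Matrix.mulVec_injective_iff_isUnit.mpr hB'
  have hx' : Bᴴ *ᵥ x ≠ 0 := by
    intro h
    apply hx
    apply hinj
    rw [Matrix.mulVec_zero]
    exact h
  have hpos := hM.dotProduct_mulVec_pos hx'
  have calc1 : star x ⬝ᵥ ((B * M * Bᴴ) *ᵥ x) = star (Bᴴ *ᵥ x) ⬝ᵥ (M *ᵥ (Bᴴ *ᵥ x)) := by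
    rw [← mulVec_mulVec, ← mulVec_mulVec, dotProduct_mulVec, star_mulVec,
      conjTranspose_conjTranspose]
  rw [calc1]
  exact hpos

/-- For `g = [[a,b],[c,d]] ∈ U(p,q)` and `z` in the matrix ball `B_{p,q}`
(i.e. `1 - zz*` positive definite), the block `a + zc` is invertible and the
linear-fractional image `(a+zc)⁻¹(b+zd)` again lies in `B_{p,q}`. -/
theorem mobius_maps_matrix_ball {p q : ℕ} (hpq : p ≤ q)
    (a : Matrix (Fin p) (Fin p) ℂ) (b : Matrix (Fin p) (Fin q) ℂ)
    (c : Matrix (Fin q) (Fin p) ℂ) (d : Matrix (Fin q) (Fin q) ℂ)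
    (hg : fromBlocks a b c d *
        fromBlocks (1 : Matrix (Fin p) (Fin p) ℂ) 0 0 (-1 : Matrix (Fin q) (Fin q) ℂ) *
        (fromBlocks a b c d)ᴴ =
      fromBlocks (1 : Matrix (Fin p) (Fin p) ℂ) 0 0 (-1 : Matrix (Fin q) (Fin q) ℂ))
    (z : Matrix (Fin p) (Fin q) ℂ)
    (hz : ((1 : Matrix (Fin p) (Fin p) ℂ) - z * zᴴ).PosDef) :
    IsUnit (a + z * c) ∧
    ((1 : Matrix (Fin p) (Fin p) ℂ) -
      ((a + z * c)⁻¹ * (b + z * d)) * ((a + z * c)⁻¹ * (b + z * d))ᴴ).PosDef := by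
  rw [fromBlocks_conjTranspose, fromBlocks_multiply, fromBlocks_multiply] at hg
  simp only [Matrix.mul_one, Matrix.mul_zero, Matrix.zero_mul, Matrix.mul_neg,
    add_zero, zero_add, Matrix.neg_mul] at hg
  rw [fromBlocks_inj] at hg
  obtain ⟨h11, h12, h21, h22⟩ := hg
  set A := a + z * c with hA
  set B := b + z * d with hB
  have hkey : A * Aᴴ - B * Bᴴ = 1 - z * zᴴ := by
    have expand : A * Aᴴ - B * Bᴴ =
        (a * aᴴ + -(b * bᴴ)) + (a * cᴴ + -(b * dᴴ)) * zᴴ + z * (c * aᴴ + -(d * bᴴ))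
          + z * (c * cᴴ + -(d * dᴴ)) * zᴴ := by
      rw [hA, hB]
      simp only [conjTranspose_add, conjTranspose_mul, Matrix.mul_add, Matrix.add_mul,
        Matrix.mul_neg, Matrix.neg_mul, Matrix.mul_assoc, sub_eq_add_neg, neg_add]
      abel
    rw [expand, h11, h12, h21, h22]
    simp only [Matrix.zero_mul, Matrix.mul_zero, add_zero, Matrix.mul_neg, Matrix.neg_mul,
      Matrix.mul_one, sub_eq_add_neg]
  have hAAH : (A * Aᴴ).PosDef := by
    have hrw : A * Aᴴ = (1 - z * zᴴ) + B * Bᴴ := by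
      rw [← hkey]; abel
    rw [hrw]
    exact hz.add_posSemidef (posSemidef_self_mul_conjTranspose B)
  have hAunit : IsUnit A := by
    have hdet : IsUnit (A.det * Aᴴ.det) := by
      rw [← Matrix.det_mul]
      exact (Matrix.isUnit_iff_isUnit_det _).mp hAAH.isUnit
    exact (Matrix.isUnit_iff_isUnit_det _).mpr (isUnit_of_mul_isUnit_left hdet)
  refine ⟨hAunit, ?_⟩
  have hdetA : IsUnit A.det := (Matrix.isUnit_iff_isUnit_det _).mp hAunit
  have hinvA : A⁻¹ * A = 1 := Matrix.nonsing_inv_mul _ hdetA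
  have h1 : (1 : Matrix (Fin p) (Fin p) ℂ) = A⁻¹ * (A * Aᴴ) * (A⁻¹)ᴴ := by
    rw [← Matrix.mul_assoc, hinvA, Matrix.one_mul, ← Matrix.conjTranspose_mul, hinvA,
      Matrix.conjTranspose_one]
  have hfinal : (1 : Matrix (Fin p) (Fin p) ℂ) - (A⁻¹ * B) * (A⁻¹ * B)ᴴ
      = A⁻¹ * (1 - z * zᴴ) * (A⁻¹)ᴴ := by
    calc (1 : Matrix (Fin p) (Fin p) ℂ) - (A⁻¹ * B) * (A⁻¹ * B)ᴴ
        = A⁻¹ * (A * Aᴴ) * (A⁻¹)ᴴ - A⁻¹ * (B * Bᴴ) * (A⁻¹)ᴴ := by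
          rw [← h1]
          congr 1
          rw [conjTranspose_mul]
          simp only [Matrix.mul_assoc]
      _ = A⁻¹ * (A * Aᴴ - B * Bᴴ) * (A⁻¹)ᴴ := by
          rw [Matrix.mul_sub, Matrix.sub_mul]
      _ = A⁻¹ * (1 - z * zᴴ) * (A⁻¹)ᴴ := by rw [hkey]
  rw [hfinal]
  exact posDef_mul_mul_conjTranspose hz
    ((Matrix.isUnit_nonsing_inv_iff).mpr hAunit)
end

section
/- For g = [[a,b],[c,d]] ∈ U(p,q) and z, u ∈ B_{p,q}, writing z^[g] = (a+zc)^{-1}(b+zd) and u^[g] = (a+uc)^{-1}(b+ud), one has the identity 1 - z^[g]·(u^[g])* = (a+zc)^{-1}·(1 - zu*)·(a* + c*u*)^{-1}. -/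
/-!
Write `J = diag(1, -1)`. The numerator and denominator of `z^[g]` are the two blocks of the
row `[1 z] g`, so `g J gᴴ = J` gives
`(a + zc)(a + uc)ᴴ - (b + zd)(b + ud)ᴴ = [1 z] J [1 u]ᴴ = 1 - zuᴴ`.
For `u = z` this exhibits `(a + zc)(a + zc)ᴴ` as `1 - zzᴴ` plus a positive semidefinite
matrix, so `a + zc` is invertible on the ball; multiplying the identity by `(a + zc)⁻¹` on the
left and by `((a + uc)ᴴ)⁻¹` on the right gives the theorem.
-/

open Matrix
open scoped ComplexOrder

namespace Matrix

section IndefiniteForm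

variable {l m n R : Type*} [Fintype m] [Fintype n] [DecidableEq m] [DecidableEq n]
  [Ring R] [StarRing R]

theorem fromCols_mul_fromBlocks_one_neg_one_mul_conjTranspose
    (X X' : Matrix l m R) (Y Y' : Matrix l n R) :
    fromCols X Y * fromBlocks (1 : Matrix m m R) 0 0 (-1 : Matrix n n R) * (fromCols X' Y')ᴴ =
      X * X'ᴴ - Y * Y'ᴴ := by
  rw [fromCols_mul_fromBlocks, conjTranspose_fromCols_eq_fromRows_conjTranspose,
    fromCols_mul_fromRows]
  simp [sub_eq_add_neg]

theorem mul_conjTranspose_sub_mul_conjTranspose_eq_one_sub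
    {a : Matrix m m R} {b : Matrix m n R} {c : Matrix n m R} {d : Matrix n n R}
    (hg : fromBlocks a b c d * fromBlocks 1 0 0 (-1) * (fromBlocks a b c d)ᴴ =
      fromBlocks 1 0 0 (-1))
    (z u : Matrix m n R) :
    (a + z * c) * (a + u * c)ᴴ - (b + z * d) * (b + u * d)ᴴ = 1 - z * uᴴ := by
  have row (w : Matrix m n R) :
      fromCols (1 : Matrix m m R) w * fromBlocks a b c d = fromCols (a + w * c) (b + w * d) := by
    rw [fromCols_mul_fromBlocks, Matrix.one_mul, Matrix.one_mul]
  have form_rows : fromCols (1 : Matrix m m R) z *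
      fromBlocks (1 : Matrix m m R) 0 0 (-1 : Matrix n n R) * (fromCols (1 : Matrix m m R) u)ᴴ =
        1 - z * uᴴ := by
    rw [fromCols_mul_fromBlocks_one_neg_one_mul_conjTranspose, conjTranspose_one,
      Matrix.mul_one]
  rw [← form_rows, ← hg, ← fromCols_mul_fromBlocks_one_neg_one_mul_conjTranspose, ← row,
    ← row]
  simp only [conjTranspose_mul, Matrix.mul_assoc]

end IndefiniteForm

theorem isUnit_of_posDef_mul_conjTranspose {n K : Type*} [Fintype n] [DecidableEq n] [Field K]
    [PartialOrder K] [StarRing K] {A : Matrix n n K} (h : (A * Aᴴ).PosDef) : IsUnit A :=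
  isUnit_of_mul_isUnit_left h.isUnit

theorem one_sub_nonsing_inv_mul_mul_conjTranspose {m n R : Type*} [Fintype m] [DecidableEq m]
    [Fintype n] [CommRing R] [StarRing R] {A B : Matrix m m R} (hA : IsUnit A) (hB : IsUnit B)
    (N M : Matrix m n R) :
    1 - A⁻¹ * N * (B⁻¹ * M)ᴴ = A⁻¹ * (A * Bᴴ - N * Mᴴ) * Bᴴ⁻¹ := by
  rw [← conjTranspose_nonsing_inv, Matrix.mul_sub, Matrix.sub_mul, ← Matrix.mul_assoc A⁻¹ A,
    nonsing_inv_mul A ((isUnit_iff_isUnit_det A).1 hA), Matrix.one_mul, ← conjTranspose_mul,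
    nonsing_inv_mul B ((isUnit_iff_isUnit_det B).1 hB), conjTranspose_one, conjTranspose_mul]
  simp only [Matrix.mul_assoc]

end Matrix

theorem one_sub_mobius_mul_conjTranspose_general {p q : ℕ}
    (a : Matrix (Fin p) (Fin p) ℂ) (b : Matrix (Fin p) (Fin q) ℂ)
    (c : Matrix (Fin q) (Fin p) ℂ) (d : Matrix (Fin q) (Fin q) ℂ)
    (hg : fromBlocks a b c d *
        fromBlocks (1 : Matrix (Fin p) (Fin p) ℂ) 0 0 (-1 : Matrix (Fin q) (Fin q) ℂ) *
        (fromBlocks a b c d)ᴴ =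
      fromBlocks (1 : Matrix (Fin p) (Fin p) ℂ) 0 0 (-1 : Matrix (Fin q) (Fin q) ℂ))
    (z u : Matrix (Fin p) (Fin q) ℂ)
    (hz : ((1 : Matrix (Fin p) (Fin p) ℂ) - z * zᴴ).PosDef)
    (hu : ((1 : Matrix (Fin p) (Fin p) ℂ) - u * uᴴ).PosDef) :
    (1 : Matrix (Fin p) (Fin p) ℂ) -
      ((a + z * c)⁻¹ * (b + z * d)) * ((a + u * c)⁻¹ * (b + u * d))ᴴ =
    (a + z * c)⁻¹ * ((1 : Matrix (Fin p) (Fin p) ℂ) - z * uᴴ) * (aᴴ + cᴴ * uᴴ)⁻¹ := by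
  have key := mul_conjTranspose_sub_mul_conjTranspose_eq_one_sub hg
  have denom_isUnit (w : Matrix (Fin p) (Fin q) ℂ) (hw : (1 - w * wᴴ).PosDef) :
      IsUnit (a + w * c) := by
    refine isUnit_of_posDef_mul_conjTranspose ?_
    rw [← sub_add_cancel ((a + w * c) * (a + w * c)ᴴ) ((b + w * d) * (b + w * d)ᴴ), key]
    exact hw.add_posSemidef (posSemidef_self_mul_conjTranspose _)
  rw [one_sub_nonsing_inv_mul_mul_conjTranspose (denom_isUnit z hz) (denom_isUnit u hu), key,
    conjTranspose_add, conjTranspose_mul]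

/-- The fundamental identity
`1 - z^[g] (u^[g])* = (a+zc)⁻¹ (1 - zu*) (a* + c*u*)⁻¹`
for the linear-fractional action of `U(p,q)` on the matrix ball `B_{p,q}`. -/
theorem one_sub_mobius_mul_conjTranspose {p q : ℕ} (hpq : p ≤ q)
    (a : Matrix (Fin p) (Fin p) ℂ) (b : Matrix (Fin p) (Fin q) ℂ)
    (c : Matrix (Fin q) (Fin p) ℂ) (d : Matrix (Fin q) (Fin q) ℂ)
    (hg : fromBlocks a b c d *
        fromBlocks (1 : Matrix (Fin p) (Fin p) ℂ) 0 0 (-1 : Matrix (Fin q) (Fin q) ℂ) *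
        (fromBlocks a b c d)ᴴ =
      fromBlocks (1 : Matrix (Fin p) (Fin p) ℂ) 0 0 (-1 : Matrix (Fin q) (Fin q) ℂ))
    (z u : Matrix (Fin p) (Fin q) ℂ)
    (hz : ((1 : Matrix (Fin p) (Fin p) ℂ) - z * zᴴ).PosDef)
    (hu : ((1 : Matrix (Fin p) (Fin p) ℂ) - u * uᴴ).PosDef) :
    (1 : Matrix (Fin p) (Fin p) ℂ) -
      ((a + z * c)⁻¹ * (b + z * d)) * ((a + u * c)⁻¹ * (b + u * d))ᴴ =
    (a + z * c)⁻¹ * ((1 : Matrix (Fin p) (Fin p) ℂ) - z * uᴴ) * (aᴴ + cᴴ * uᴴ)⁻¹ :=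
  one_sub_mobius_mul_conjTranspose_general a b c d hg z u hz hu
end

section
/- Let ν be a positive measure on the cone Pos_q of positive semidefinite Hermitian q×q matrices such that the Laplace transform ∫ exp(-tr(XT)) dν(X) converges for all T with T+T* > 0. Then the kernel K(T,S) := ∫_{Pos_q} exp(-tr(X(T*+S))) dν(X) on the Siegel wedge W_q = {T : T+T* > 0} is positive definite. In particular, if det(T)^{-α} is such a Laplace transform, then (T,S) ↦ det(T*+S)^{-α} is a positive definite kernel on W_q. -/
open Matrix MeasureTheory
open scoped ComplexOrder

/-- A positive definite kernel on a subset `W` of `M`: Hermitian symmetric on `W`,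
with all finite quadratic forms built from points of `W` nonnegative. -/
def IsPosDefKernelOn {M : Type*} (W : Set M) (K : M → M → ℂ) : Prop :=
  (∀ T ∈ W, ∀ S ∈ W, K T S = (starRingEnd ℂ) (K S T)) ∧
  ∀ (n : ℕ) (T : Fin n → M), (∀ i, T i ∈ W) → ∀ w : Fin n → ℂ,
    0 ≤ (∑ i, ∑ j, K (T i) (T j) * w i * (starRingEnd ℂ) (w j)).re

/-!
For `X ⪰ 0` the functions `e_T(X) = exp(-tr(XT))` satisfy
`exp(-tr(X(T*+S))) = conj(e_T(X)) e_S(X)`, so the kernel is the Gram kernel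
`K(T,S) = ⟨e_T, e_S⟩` in `L²(ν|Pos_q)`, and `∑ K(Tᵢ,Tⱼ) wᵢ conj wⱼ = ∫ |∑ conj wᵢ e_{Tᵢ}|² dν ≥ 0`.
The wedge `W_q` is stable under `(T,S) ↦ T* + S`, which is exactly what makes every
product `conj(e_T) e_S` integrable.
-/

local notation "conj" => starRingEnd ℂ

theorem IsPosDefKernelOn.congr {M : Type*} {W : Set M} {K K' : M → M → ℂ}
    (hK : IsPosDefKernelOn W K) (h : ∀ T ∈ W, ∀ S ∈ W, K T S = K' T S) :
    IsPosDefKernelOn W K' := by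
  obtain ⟨hsymm, hpos⟩ := hK
  refine ⟨fun T hT S hS => ?_, fun n T hT w => ?_⟩
  · rw [← h T hT S hS, ← h S hS T hT]
    exact hsymm T hT S hS
  · simpa only [h (T _) (hT _) (T _) (hT _)] using hpos n T hT w

theorem Complex.ofReal_normSq_sum_conj_mul {ι : Type*} (s : Finset ι) (a w : ι → ℂ) :
    (Complex.normSq (∑ i ∈ s, conj (w i) * a i) : ℂ) =
      ∑ i ∈ s, ∑ j ∈ s, conj (a i) * a j * w i * conj (w j) := by
  rw [Complex.normSq_eq_conj_mul_self, map_sum, Finset.sum_mul_sum]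
  refine Finset.sum_congr rfl fun i _ => Finset.sum_congr rfl fun j _ => ?_
  simp only [map_mul, Complex.conj_conj]
  ring

theorem isPosDefKernelOn_integral_conj_mul {M Ω : Type*} [MeasurableSpace Ω] {μ : Measure Ω}
    {W : Set M} {f : M → Ω → ℂ}
    (hf : ∀ x ∈ W, ∀ y ∈ W, Integrable (fun ω => conj (f x ω) * f y ω) μ) :
    IsPosDefKernelOn W (fun x y => ∫ ω, conj (f x ω) * f y ω ∂μ) := by
  refine ⟨fun x _ y _ => ?_, fun n x hx w => ?_⟩
  · rw [← integral_conj]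
    simp only [map_mul, Complex.conj_conj, mul_comm]
  have hint : ∀ i j, Integrable (fun ω => conj (f (x i) ω) * f (x j) ω) μ :=
    fun i j => hf _ (hx i) _ (hx j)
  have hgram : ∑ i, ∑ j, (∫ ω, conj (f (x i) ω) * f (x j) ω ∂μ) * w i * conj (w j) =
      ((∫ ω, Complex.normSq (∑ i, conj (w i) * f (x i) ω) ∂μ : ℝ) : ℂ) := by
    rw [← integral_complex_ofReal]
    simp only [Complex.ofReal_normSq_sum_conj_mul]
    rw [integral_finsetSum _ fun i _ =>
      integrable_finsetSum _ fun j _ => ((hint i j).mul_const _).mul_const _]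
    refine Finset.sum_congr rfl fun i _ => ?_
    rw [integral_finsetSum _ fun j _ => ((hint i j).mul_const _).mul_const _]
    simp only [integral_mul_const]
  rw [hgram, Complex.ofReal_re]
  exact integral_nonneg fun ω => Complex.normSq_nonneg _

def siegelWedge (n : Type*) [Fintype n] : Set (Matrix n n ℂ) := {T | (T + Tᴴ).PosDef}

theorem conjTranspose_add_mem_siegelWedge {n : Type*} [Fintype n] {T S : Matrix n n ℂ}
    (hT : T ∈ siegelWedge n) (hS : S ∈ siegelWedge n) : Tᴴ + S ∈ siegelWedge n := by
  have h : (Tᴴ + S) + (Tᴴ + S)ᴴ = (T + Tᴴ) + (S + Sᴴ) := by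
    rw [conjTranspose_add, conjTranspose_conjTranspose]
    abel
  exact show ((Tᴴ + S) + (Tᴴ + S)ᴴ).PosDef from h ▸ PosDef.add hT hS

theorem conj_exp_neg_trace_mul {n : Type*} [Fintype n] (X : selfAdjoint (Matrix n n ℂ))
    (T : Matrix n n ℂ) :
    conj (Complex.exp (-(X.val * T).trace)) = Complex.exp (-(X.val * Tᴴ).trace) := by
  have hX : X.valᴴ = X.val := X.prop
  rw [← Complex.exp_conj, map_neg, ← Complex.star_def, ← trace_conjTranspose,
    conjTranspose_mul, hX, trace_mul_comm]

theorem exp_neg_trace_mul_conjTranspose_add {n : Type*} [Fintype n]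
    (X : selfAdjoint (Matrix n n ℂ)) (T S : Matrix n n ℂ) :
    Complex.exp (-(X.val * (Tᴴ + S)).trace) =
      conj (Complex.exp (-(X.val * T).trace)) * Complex.exp (-(X.val * S).trace) := by
  rw [conj_exp_neg_trace_mul, mul_add, trace_add, neg_add, Complex.exp_add]

/-- The Laplace transform of a positive measure on the cone `Pos_q` of positive
semidefinite Hermitian matrices yields a positive definite kernel
`K(T,S) = ∫ exp(-tr(X(T*+S))) dν(X)` on the Siegel wedge `W_q`; in particular,
if `det(T)^{-α}` is such a Laplace transform, then `(T,S) ↦ det(T*+S)^{-α}` is a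
positive definite kernel on `W_q`. -/
theorem laplace_transform_posDef_kernel {q : ℕ}
    [MeasurableSpace (selfAdjoint (Matrix (Fin q) (Fin q) ℂ))]
    (ν : Measure (selfAdjoint (Matrix (Fin q) (Fin q) ℂ))) (α : ℝ)
    (hconv : ∀ T : Matrix (Fin q) (Fin q) ℂ, (T + Tᴴ).PosDef →
      IntegrableOn
        (fun X : selfAdjoint (Matrix (Fin q) (Fin q) ℂ) =>
          Complex.exp (-((X.val * T).trace)))
        {X : selfAdjoint (Matrix (Fin q) (Fin q) ℂ) | X.val.PosSemidef} ν) :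
    IsPosDefKernelOn {T : Matrix (Fin q) (Fin q) ℂ | (T + Tᴴ).PosDef}
      (fun T S => ∫ X in {X : selfAdjoint (Matrix (Fin q) (Fin q) ℂ) | X.val.PosSemidef},
        Complex.exp (-((X.val * (Tᴴ + S)).trace)) ∂ν) ∧
    ((∀ T : Matrix (Fin q) (Fin q) ℂ, (T + Tᴴ).PosDef →
        T.det ^ (-(α : ℂ)) =
          ∫ X in {X : selfAdjoint (Matrix (Fin q) (Fin q) ℂ) | X.val.PosSemidef},
            Complex.exp (-((X.val * T).trace)) ∂ν) →
      IsPosDefKernelOn {T : Matrix (Fin q) (Fin q) ℂ | (T + Tᴴ).PosDef}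
        (fun T S => (Tᴴ + S).det ^ (-(α : ℂ)))) := by
  have hlaplace : IsPosDefKernelOn (siegelWedge (Fin q))
      (fun T S => ∫ X in {X : selfAdjoint (Matrix (Fin q) (Fin q) ℂ) | X.val.PosSemidef},
        Complex.exp (-((X.val * (Tᴴ + S)).trace)) ∂ν) := by
    simp only [exp_neg_trace_mul_conjTranspose_add]
    refine isPosDefKernelOn_integral_conj_mul fun T hT S hS => ?_
    simpa only [IntegrableOn, exp_neg_trace_mul_conjTranspose_add] using
      hconv _ (conjTranspose_add_mem_siegelWedge hT hS)
  exact ⟨hlaplace, fun hdet => hlaplace.congr fun T hT S hS =>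
    (hdet _ (conjTranspose_add_mem_siegelWedge hT hS)).symm⟩
end

section
/- Determinant integral identity (Andréief/Heine): for a measure μ on ℝ and functions f_1,...,f_p, g_1,...,g_p such that all products f_k·g_m are μ-integrable, ∫_{ℝ^p} det[f_k(x_l)] · det[g_k(x_l)] dμ(x_1)⋯dμ(x_p) = p! · det[ ∫_ℝ f_k(x) g_m(x) dμ(x) ]. -/
open MeasureTheory

/-- The Andréief (Heine) determinant integral identity:
`∫_{ℝ^p} det[f_k(x_l)] det[g_k(x_l)] dμ(x_1)⋯dμ(x_p)
  = p! · det[∫ f_k g_m dμ]`. -/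
theorem andreief_identity {p : ℕ} (μ : Measure ℝ) [SigmaFinite μ]
    (f g : Fin p → ℝ → ℝ)
    (hfg : ∀ k m : Fin p, Integrable (fun t => f k t * g m t) μ) :
    ∫ x : Fin p → ℝ,
        Matrix.det (Matrix.of fun k l : Fin p => f k (x l)) *
          Matrix.det (Matrix.of fun k l : Fin p => g k (x l))
        ∂(Measure.pi fun _ => μ) =
      (p.factorial : ℝ) *
        Matrix.det (Matrix.of fun k m : Fin p => ∫ t, f k t * g m t ∂μ) := by
  classical
  letI : MeasureSpace ℝ := ⟨μ⟩
  haveI : SigmaFinite (volume : Measure ℝ) := ‹SigmaFinite μ›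
  have hE : ∀ σ τ : Equiv.Perm (Fin p),
      Integrable (fun x : Fin p → ℝ => ∏ l, (f (σ l) (x l) * g (τ l) (x l)))
        (Measure.pi fun _ => μ) := fun σ τ =>
    Integrable.fintype_prod (f := fun l t => f (σ l) t * g (τ l) t)
      (fun l => hfg (σ l) (τ l))
  have key : ∀ x : Fin p → ℝ,
      Matrix.det (Matrix.of fun k l : Fin p => f k (x l)) *
        Matrix.det (Matrix.of fun k l : Fin p => g k (x l)) =
      ∑ σ : Equiv.Perm (Fin p), ∑ τ : Equiv.Perm (Fin p),
        (((Equiv.Perm.sign σ : ℤ) : ℝ) * ((Equiv.Perm.sign τ : ℤ) : ℝ)) *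
          ∏ l, (f (σ l) (x l) * g (τ l) (x l)) := by
    intro x
    rw [Matrix.det_apply', Matrix.det_apply', Finset.sum_mul_sum]
    refine Finset.sum_congr rfl fun σ _ => Finset.sum_congr rfl fun τ _ => ?_
    rw [Finset.prod_mul_distrib]
    simp only [Matrix.of_apply]
    ring
  simp_rw [key]
  rw [integral_finset_sum _ fun σ _ =>
    integrable_finset_sum _ fun τ _ => ((hE σ τ).const_mul _)]
  have step : ∀ σ τ : Equiv.Perm (Fin p),
      (∫ x : Fin p → ℝ,
        (((Equiv.Perm.sign σ : ℤ) : ℝ) * ((Equiv.Perm.sign τ : ℤ) : ℝ)) *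
          ∏ l, (f (σ l) (x l) * g (τ l) (x l)) ∂(Measure.pi fun _ => μ))
      = (((Equiv.Perm.sign σ : ℤ) : ℝ) * ((Equiv.Perm.sign τ : ℤ) : ℝ)) *
          ∏ l, ∫ t, f (σ l) t * g (τ l) t ∂μ := by
    intro σ τ
    rw [integral_const_mul]
    congr 1
    exact integral_fintype_prod_eq_prod (ι := Fin p) (f := fun l t => f (σ l) t * g (τ l) t)
  have inner : ∀ σ : Equiv.Perm (Fin p),
      ∑ τ : Equiv.Perm (Fin p),
        (((Equiv.Perm.sign σ : ℤ) : ℝ) * ((Equiv.Perm.sign τ : ℤ) : ℝ)) *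
          ∏ l, ∫ t, f (σ l) t * g (τ l) t ∂μ
      = Matrix.det (Matrix.of fun k m : Fin p => ∫ t, f k t * g m t ∂μ) := by
    intro σ
    rw [← Matrix.det_transpose, Matrix.det_apply']
    rw [← Equiv.sum_comp (Equiv.mulRight σ)]
    refine Finset.sum_congr rfl fun ρ _ => ?_
    have hsign : (((Equiv.Perm.sign σ : ℤ) : ℝ) *
        ((Equiv.Perm.sign (ρ * σ) : ℤ) : ℝ)) = ((Equiv.Perm.sign ρ : ℤ) : ℝ) := by
      rw [map_mul]
      push_cast
      rcases Int.units_eq_one_or (Equiv.Perm.sign σ) with h | h <;>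
        rcases Int.units_eq_one_or (Equiv.Perm.sign ρ) with h' | h' <;>
          simp [h, h']
    simp only [Equiv.coe_mulRight, Equiv.Perm.mul_apply, hsign]
    congr 1
    have hp := Equiv.prod_comp σ (fun k => ∫ t, f k t * g (ρ k) t ∂μ)
    simpa only [Matrix.transpose_apply, Matrix.of_apply] using hp
  have outer : ∀ σ : Equiv.Perm (Fin p),
      (∫ x : Fin p → ℝ, ∑ τ : Equiv.Perm (Fin p),
        (((Equiv.Perm.sign σ : ℤ) : ℝ) * ((Equiv.Perm.sign τ : ℤ) : ℝ)) *
          ∏ l, (f (σ l) (x l) * g (τ l) (x l)) ∂(Measure.pi fun _ => μ))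
      = Matrix.det (Matrix.of fun k m : Fin p => ∫ t, f k t * g m t ∂μ) := by
    intro σ
    rw [integral_finset_sum _ fun τ _ => ((hE σ τ).const_mul _)]
    simp_rw [step σ]
    exact inner σ
  simp_rw [outer]
  rw [Finset.sum_const, Finset.card_univ, Fintype.card_perm, Fintype.card_fin, nsmul_eq_mul]
end

section
/- Hua's Cauchy-type determinant identity: for formal power series coefficients a_n and variables X_1,...,X_p, Y_1,...,Y_p, det_{k,l}[ ∑_{n≥0} a_n X_k^n Y_l^n ] = ∑_{n_1 > n_2 > ... > n_p ≥ 0} a_{n_1}⋯a_{n_p} · det_{k,j}[X_k^{n_j}] · det_{k,j}[Y_k^{n_j}], provided the series converge absolutely. -/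
open Finset Matrix Equiv

private lemma pi_hasSum : ∀ {p : ℕ} (f : Fin p → ℕ → ℂ),
    (∀ i, Summable fun n => ‖f i n‖) →
    (Summable fun n : Fin p → ℕ => ‖∏ i, f i (n i)‖) ∧
      HasSum (fun n : Fin p → ℕ => ∏ i, f i (n i)) (∏ i, ∑' n, f i n) := by
  intro p
  induction p with
  | zero =>
    intro f hf
    constructor
    · exact (hasSum_single (f := fun n : Fin 0 → ℕ => ‖∏ i, f i (n i)‖) default
        (fun b hb => absurd (Subsingleton.elim b default) hb)).summable
    · simpa using hasSum_single (f := fun n : Fin 0 → ℕ => ∏ i, f i (n i)) default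
        (fun b hb => absurd (Subsingleton.elim b default) hb)
  | succ p ih =>
    intro f hf
    obtain ⟨S1, H1⟩ := ih (fun i => f i.succ) (fun i => hf i.succ)
    have hs := Summable.mul_norm (hf 0) S1
    have hh := HasSum.mul ((hf 0).of_norm.hasSum) H1 hs.of_norm
    let e : ℕ × (Fin p → ℕ) ≃ (Fin (p + 1) → ℕ) := Fin.consEquiv fun _ => ℕ
    have hcomp : ((fun n : Fin (p + 1) → ℕ => ∏ i, f i (n i)) ∘ ⇑e)
        = fun x : ℕ × (Fin p → ℕ) => f 0 x.1 * ∏ i, f i.succ (x.2 i) := by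
      funext x
      rw [Function.comp_apply, Fin.prod_univ_succ]
      simp [e, Fin.consEquiv]
    have hcompn : ((fun n : Fin (p + 1) → ℕ => ‖∏ i, f i (n i)‖) ∘ ⇑e)
        = fun x : ℕ × (Fin p → ℕ) => ‖f 0 x.1 * ∏ i, f i.succ (x.2 i)‖ := by
      funext x
      rw [Function.comp_apply, Fin.prod_univ_succ]
      simp [e, Fin.consEquiv]
    constructor
    · rw [← e.summable_iff, hcompn]; exact hs
    · rw [← e.hasSum_iff, hcomp, Fin.prod_univ_succ (f := fun i => ∑' n, f i n)]
      exact hh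

/-- Hua's Cauchy-type determinant identity:
`det_{k,l}[∑_{n≥0} a_n X_k^n Y_l^n]
  = ∑_{n_1 > … > n_p ≥ 0} a_{n_1}⋯a_{n_p} det[X_k^{n_j}] det[Y_k^{n_j}]`,
under absolute convergence of the entry series. -/
theorem hua_cauchy_determinant_identity {p : ℕ} (a : ℕ → ℂ) (X Y : Fin p → ℂ)
    (hconv : ∀ k l : Fin p, Summable fun n : ℕ => ‖a n * X k ^ n * Y l ^ n‖) :
    HasSum
      (fun n : {n : Fin p → ℕ // StrictAnti n} =>
        (∏ j : Fin p, a (n.1 j)) *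
          Matrix.det (Matrix.of fun k j : Fin p => X k ^ n.1 j) *
          Matrix.det (Matrix.of fun k j : Fin p => Y k ^ n.1 j))
      (Matrix.det (Matrix.of fun k l : Fin p => ∑' n : ℕ, a n * X k ^ n * Y l ^ n)) := by
  classical
  set M : Matrix (Fin p) (Fin p) ℂ :=
    Matrix.of fun k l : Fin p => ∑' n : ℕ, a n * X k ^ n * Y l ^ n with hM
  -- the big summand over all tuples
  set G : (Fin p → ℕ) → ℂ := fun n =>
    Matrix.det (Matrix.of fun k l : Fin p => X k ^ n l) * ∏ i, (a (n i) * Y i ^ n i)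
    with hG
  -- Step 1: per permutation
  have step1 : ∀ σ : Equiv.Perm (Fin p),
      HasSum (fun n : Fin p → ℕ => ∏ i, (a (n i) * X (σ i) ^ n i * Y i ^ n i))
        (∏ i, M (σ i) i) := by
    intro σ
    exact (pi_hasSum (fun i n => a n * X (σ i) ^ n * Y i ^ n) (fun i => hconv (σ i) i)).2
  -- Step 2: HasSum G (det M)
  have step2 : HasSum G M.det := by
    rw [Matrix.det_apply' M]
    have hsum := hasSum_sum (f := fun (σ : Equiv.Perm (Fin p)) (n : Fin p → ℕ) =>
        ((Equiv.Perm.sign σ : ℤ) : ℂ) * ∏ i, (a (n i) * X (σ i) ^ n i * Y i ^ n i))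
      (a := fun σ : Equiv.Perm (Fin p) => ((Equiv.Perm.sign σ : ℤ) : ℂ) * ∏ i, M (σ i) i)
      (s := Finset.univ) (fun σ _ => (step1 σ).mul_left _)
    have hfun : (fun n : Fin p → ℕ => ∑ σ : Equiv.Perm (Fin p),
        ((Equiv.Perm.sign σ : ℤ) : ℂ) * ∏ i, (a (n i) * X (σ i) ^ n i * Y i ^ n i)) = G := by
      funext n
      simp only [hG]
      rw [Matrix.det_apply', Finset.sum_mul]
      refine Finset.sum_congr rfl fun σ _ => ?_
      have hfac : ∏ i, (a (n i) * X (σ i) ^ n i * Y i ^ n i)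
          = (∏ i, X (σ i) ^ n i) * ∏ i, (a (n i) * Y i ^ n i) := by
        rw [← Finset.prod_mul_distrib]
        exact Finset.prod_congr rfl fun i _ => by ring
      rw [hfac]
      simp [Matrix.of_apply, mul_assoc]
    rw [← hfun]
    exact hsum
  -- Step 3: support of G consists of injective tuples
  have hsupp : Function.support G ⊆ {n : Fin p → ℕ | Function.Injective n} := by
    intro n hn
    by_contra hinj
    obtain ⟨i, j, hij, hne⟩ := Function.not_injective_iff.mp hinj
    apply hn
    rw [hG]
    have : Matrix.det (Matrix.of fun k l : Fin p => X k ^ n l) = 0 :=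
      Matrix.det_zero_of_column_eq hne fun k => by simp [hij]
    simp [this]
  have step3 : HasSum (fun n : {n : Fin p → ℕ | Function.Injective n} => G n) M.det :=
    (hasSum_subtype_iff_of_support_subset hsupp).mpr step2
  -- Step 4: the parametrization of injective tuples
  have hbij : Function.Bijective
      (fun q : {m : Fin p → ℕ // StrictAnti m} × Equiv.Perm (Fin p) =>
        (⟨q.1.1 ∘ q.2, q.1.2.injective.comp q.2.injective⟩
          : {n : Fin p → ℕ | Function.Injective n})) := by
    constructor
    · rintro ⟨⟨m, hm⟩, τ⟩ ⟨⟨m', hm'⟩, τ'⟩ h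
      have h' : m ∘ τ = m' ∘ τ' := congrArg Subtype.val h
      have hfun : ∀ j, m j = m' (τ' (τ.symm j)) := by
        intro j
        have := congrFun h' (τ.symm j)
        simpa using this
      have hmono : StrictMono fun j => τ' (τ.symm j) := by
        intro j j' hlt
        have h1 : m' (τ' (τ.symm j')) < m' (τ' (τ.symm j)) := by
          rw [← hfun j, ← hfun j']; exact hm hlt
        exact not_le.mp fun hc => absurd h1 (not_lt.mpr (hm'.antitone hc))
      have hid : (fun j => τ' (τ.symm j)) = id := by
        haveI : WellFoundedLT (Fin p) := inferInstance
        have hsurj : Function.Surjective fun j => τ' (τ.symm j) :=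
          τ'.surjective.comp τ.symm.surjective
        exact (hmono.range_inj (strictMono_id (α := Fin p))).mp
          (by rw [Set.range_id, Set.range_eq_univ]; exact hsurj)
      have hττ' : τ = τ' := by
        apply Equiv.ext
        intro j
        have := congrFun hid (τ j)
        simpa using this.symm
      have hmm' : m = m' := by
        funext j
        have h2 : τ' (τ.symm j) = j := by simpa using congrFun hid j
        rw [hfun j, h2]
      subst hττ'
      simp [Prod.ext_iff, Subtype.ext_iff, hmm']
    · rintro ⟨n, hn⟩
      have hn' : Function.Injective n := hn
      set s : Finset ℕ := Finset.image n Finset.univ with hs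
      have hcard : s.card = p := by
        rw [hs, Finset.card_image_of_injective _ hn', Finset.card_univ, Fintype.card_fin]
      set e1 := s.orderIsoOfFin hcard with he1
      have hmem : ∀ k, n k ∈ s := fun k => Finset.mem_image_of_mem n (Finset.mem_univ k)
      set m : Fin p → ℕ := fun j => (e1 j.rev : ℕ) with hm
      have hmanti : StrictAnti m := by
        intro j j' hlt
        have : j'.rev < j.rev := Fin.rev_lt_rev.mpr hlt
        exact_mod_cast e1.strictMono this
      set τ0 : Fin p → Fin p := fun k => (e1.symm ⟨n k, hmem k⟩).rev with hτ0
      have hτ0inj : Function.Injective τ0 := by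
        intro k k' hkk'
        have := Fin.rev_injective hkk'
        have := e1.symm.injective this
        have : n k = n k' := congrArg Subtype.val this
        exact hn' this
      obtain ⟨hinj, hsurj⟩ := Finite.injective_iff_bijective.mp hτ0inj
      refine ⟨⟨⟨m, hmanti⟩, Equiv.ofBijective τ0 ⟨hinj, hsurj⟩⟩, ?_⟩
      apply Subtype.ext
      funext k
      show m (τ0 k) = n k
      rw [hm, hτ0]
      simp [Fin.rev_rev]
  set eq : {m : Fin p → ℕ // StrictAnti m} × Equiv.Perm (Fin p) ≃
      {n : Fin p → ℕ | Function.Injective n} := Equiv.ofBijective _ hbij with heq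
  have step4 : HasSum (fun q : {m : Fin p → ℕ // StrictAnti m} × Equiv.Perm (Fin p) =>
      G (q.1.1 ∘ q.2)) M.det := by
    have := eq.hasSum_iff.mpr step3
    exact this
  -- Step 5: sum over each fiber
  refine step4.prod_fiberwise fun m => ?_
  have hfin := hasSum_fintype (fun τ : Equiv.Perm (Fin p) => G (m.1 ∘ τ))
  have hval : ∑ τ : Equiv.Perm (Fin p), G (m.1 ∘ τ)
      = (∏ j : Fin p, a (m.1 j)) *
          Matrix.det (Matrix.of fun k j : Fin p => X k ^ m.1 j) *
          Matrix.det (Matrix.of fun k j : Fin p => Y k ^ m.1 j) := by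
    have hG1 : ∀ τ : Equiv.Perm (Fin p), G (m.1 ∘ τ)
        = (((Equiv.Perm.sign τ : ℤ) : ℂ) *
            Matrix.det (Matrix.of fun k j : Fin p => X k ^ m.1 j)) *
          ((∏ j, a (m.1 j)) * ∏ i, Y i ^ m.1 (τ i)) := by
      intro τ
      simp only [hG]
      have hdet : Matrix.det (Matrix.of fun k l : Fin p => X k ^ (m.1 ∘ τ) l)
          = ((Equiv.Perm.sign τ : ℤ) : ℂ) *
            Matrix.det (Matrix.of fun k j : Fin p => X k ^ m.1 j) := by
        have := Matrix.det_permute' τ (Matrix.of fun k j : Fin p => X k ^ m.1 j)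
        convert this using 2
        ext k l; rfl
      rw [hdet]
      have hprod : ∏ i, (a ((m.1 ∘ τ) i) * Y i ^ (m.1 ∘ τ) i)
          = (∏ j, a (m.1 j)) * ∏ i, Y i ^ m.1 (τ i) := by
        rw [Finset.prod_mul_distrib]
        congr 1
        exact Equiv.prod_comp τ fun j => a (m.1 j)
      rw [hprod]
    have hdetY : Matrix.det (Matrix.of fun k j : Fin p => Y k ^ m.1 j)
        = ∑ τ : Equiv.Perm (Fin p), ((Equiv.Perm.sign τ : ℤ) : ℂ) * ∏ i, Y i ^ m.1 (τ i) := by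
      rw [← Matrix.det_transpose, Matrix.det_apply']
      exact Finset.sum_congr rfl fun τ _ => rfl
    calc ∑ τ : Equiv.Perm (Fin p), G (m.1 ∘ τ)
        = ∑ τ : Equiv.Perm (Fin p), (((Equiv.Perm.sign τ : ℤ) : ℂ) *
            Matrix.det (Matrix.of fun k j : Fin p => X k ^ m.1 j)) *
          ((∏ j, a (m.1 j)) * ∏ i, Y i ^ m.1 (τ i)) :=
          Finset.sum_congr rfl fun τ _ => hG1 τ
      _ = (∏ j : Fin p, a (m.1 j)) *
            Matrix.det (Matrix.of fun k j : Fin p => X k ^ m.1 j) *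
            ∑ τ : Equiv.Perm (Fin p), ((Equiv.Perm.sign τ : ℤ) : ℂ) * ∏ i, Y i ^ m.1 (τ i) := by
          rw [Finset.mul_sum]
          exact Finset.sum_congr rfl fun τ _ => by ring
      _ = _ := by rw [← hdetY]
  -- conclude
  have : HasSum (fun τ : Equiv.Perm (Fin p) => G (m.1 ∘ τ))
      ((∏ j : Fin p, a (m.1 j)) *
          Matrix.det (Matrix.of fun k j : Fin p => X k ^ m.1 j) *
          Matrix.det (Matrix.of fun k j : Fin p => Y k ^ m.1 j)) := hval ▸ hfin
  convert this using 2
end
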